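/- arXiv:2501.15637 — 3 statements merged into one kernel-verified Lean document; each statement's English description precedes it below -/
import Mathlib

section
/- Let k ∈ ℕ and let s : ℕ^k → ℕ∞ (where ℕ∞ = ℕ ∪ {∞}). Then there exists a finite set S ⊆ ℕ^k such that s n < ∞ for all n ∈ S, and for every x ∈ [0,∞]^k one has inf_{n ∈ ℕ^k} (n·x + s n) = min_{n ∈ S} (n·x + s n), where n·x = Σᵢ nᵢ xᵢ. -/
open scoped ENNReal

/-!
By Dickson's lemma `ℕ^k × ℕ∞` is well-quasi-ordered, so the finite part of the graph of `s`,
`{(n, s n) | s n < ∞}`, has finitely many minimal elements and every point of it lies above one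
of them. Since `(n, e) ↦ n·x + e` is monotone, the infimum is attained on the first coordinates
of these minimal elements, for every `x` at once.
-/

theorem Set.exists_finset_subset_forall_exists_le {α : Type*} [PartialOrder α]
    [WellQuasiOrderedLE α] (T : Set α) : ∃ F : Finset α, ↑F ⊆ T ∧ ∀ t ∈ T, ∃ f ∈ F, f ≤ t := by
  have hmin_antichain : IsAntichain (· ≤ ·) {x | Minimal (· ∈ T) x} :=
    fun x hx y hy hne hle => hne (hy.eq_of_le hx.1 hle)
  have hfin := WellQuasiOrderedLE.finite_of_isAntichain hmin_antichain
  refine ⟨hfin.toFinset, fun x hx => (hfin.mem_toFinset.1 hx).1, fun t ht => ?_⟩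
  obtain ⟨f, hft, hf⟩ := (Set.isPWO_of_wellQuasiOrderedLE T).exists_le_minimal ht
  exact ⟨f, hfin.mem_toFinset.2 hf, hft⟩

theorem monotone_sum_natCast_mul_add_enatCast {ι : Type*} [Fintype ι] (x : ι → ℝ≥0∞) :
    Monotone fun p : (ι → ℕ) × ℕ∞ => ∑ i, (p.1 i : ℝ≥0∞) * x i + (p.2 : ℝ≥0∞) := by
  intro p q hpq
  dsimp only
  gcongr with i
  · exact_mod_cast hpq.1 i
  · exact_mod_cast hpq.2

theorem stmt_0 (k : ℕ) (s : (Fin k → ℕ) → ℕ∞) :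
    ∃ S : Finset (Fin k → ℕ),
      (∀ n ∈ S, s n < ⊤) ∧
      ∀ x : Fin k → ℝ≥0∞,
        (⨅ n : Fin k → ℕ, (∑ i, (n i : ℝ≥0∞) * x i) + (s n : ℝ≥0∞)) =
          S.inf (fun n => (∑ i, (n i : ℝ≥0∞) * x i) + (s n : ℝ≥0∞)) := by
  classical
  obtain ⟨F, hF, hF_le⟩ :=
    Set.exists_finset_subset_forall_exists_le {p : (Fin k → ℕ) × ℕ∞ | s p.1 = p.2 ∧ p.2 < ⊤}
  refine ⟨F.image Prod.fst, ?_, fun x => ?_⟩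
  · simp only [Finset.mem_image]
    rintro _ ⟨p, hp, rfl⟩
    obtain ⟨hsp, hp_lt⟩ := hF hp
    rwa [hsp]
  refine le_antisymm (Finset.le_inf fun n _ => iInf_le _ n) (le_iInf fun n => ?_)
  obtain hn | hn := lt_or_eq_of_le (le_top : s n ≤ ⊤)
  · obtain ⟨q, hqF, hq_le⟩ := hF_le (n, s n) ⟨rfl, hn⟩
    refine (Finset.inf_le (Finset.mem_image_of_mem Prod.fst hqF)).trans ?_
    rw [(hF hqF).1]
    exact (monotone_sum_natCast_mul_add_enatCast x hq_le :)
  · simp [hn]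
end

section
/- Let s : ℕ^k → ℕ∞ and define S = { n ∈ ℕ^k : s n < ∞ and for all m ≺ n, s m > s n }. Then S is finite. -/
/-!
An infinite subset of `ℕ^k` contains a strictly increasing sequence (Dickson's lemma: `ℕ^k` is
well-quasi-ordered). Along such a sequence inside `S` the values of `s` strictly decrease, which is
impossible in the well-founded order `ℕ∞`.
-/

theorem Set.IsPWO.finite_of_strictAntiOn {α β : Type*} [PartialOrder α] [Preorder β]
    [WellFoundedLT β] {s : Set α} {f : α → β} (hs : s.IsPWO) (hf : StrictAntiOn f s) :
    s.Finite := by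
  by_contra hinf
  let e := (Set.not_finite.mp hinf).natEmbedding
  have he : ∀ n, (e n : α) ∈ s := fun n => (e n).2
  obtain ⟨g, hmono⟩ := hs.exists_monotone_subseq he
  have hstrict : StrictMono fun n => (e (g n) : α) :=
    hmono.strictMono_of_injective (Subtype.val_injective.comp (e.injective.comp g.injective))
  exact not_strictAnti_of_wellFoundedLT (fun n => f (e (g n)))
    fun _ _ hmn => hf (he _) (he _) (hstrict hmn)

theorem stmt_2 (k : ℕ) (s : (Fin k → ℕ) → ℕ∞) :
    {n : Fin k → ℕ | s n < ⊤ ∧ ∀ m : Fin k → ℕ, m < n → s n < s m}.Finite :=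
  (Set.isPWO_of_wellQuasiOrderedLE _).finite_of_strictAntiOn
    fun _ _ _ hb hab => hb.2 _ hab
end

section
/- For all subsets A, B, C of ℕ^n: if A_min ⊆ B + C ⊆ A, then A_min = (B_min + C_min)_min, where X_min denotes the set of minimal elements of X under the componentwise order and B + C = { b + c : b ∈ B, c ∈ C } is the Minkowski sum. -/
open scoped Pointwise

/-- The set of minimal elements of `X` with respect to the componentwise order. -/
def minSet {n : ℕ} (X : Set (Fin n → ℕ)) : Set (Fin n → ℕ) :=
  {x | x ∈ X ∧ ∀ y ∈ X, y ≤ x → y = x}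

lemma exists_minSet_le {n : ℕ} (X : Set (Fin n → ℕ)) {x : Fin n → ℕ} (hx : x ∈ X) :
    ∃ m ∈ minSet X, m ≤ x := by
  have hwf : WellFounded ((· < ·) : (Fin n → ℕ) → (Fin n → ℕ) → Prop) :=
    IsWellFounded.wf
  obtain ⟨m, ⟨hmX, hmx⟩, hmin⟩ := hwf.has_min {y | y ∈ X ∧ y ≤ x} ⟨x, hx, le_rfl⟩
  refine ⟨m, ⟨hmX, fun y hy hyle => ?_⟩, hmx⟩
  have : ¬ y < m := hmin y ⟨hy, hyle.trans hmx⟩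
  exact hyle.lt_or_eq.resolve_left this

lemma minSet_mem_sum {n : ℕ} {A B C : Set (Fin n → ℕ)}
    (h1 : minSet A ⊆ B + C) (h2 : B + C ⊆ A) {a : Fin n → ℕ} (ha : a ∈ minSet A) :
    a ∈ minSet B + minSet C := by
  obtain ⟨b, hb, c, hc, hbc⟩ := h1 ha
  obtain ⟨b', hb', hb'le⟩ := exists_minSet_le B hb
  obtain ⟨c', hc', hc'le⟩ := exists_minSet_le C hc
  have hle : b' + c' ≤ a := hbc ▸ add_le_add hb'le hc'le
  have hmem : b' + c' ∈ A := h2 ⟨b', hb'.1, c', hc'.1, rfl⟩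
  have heq : b' + c' = a := ha.2 _ hmem hle
  exact ⟨b', hb', c', hc', heq⟩

theorem stmt_7 (n : ℕ) (A B C : Set (Fin n → ℕ))
    (h1 : minSet A ⊆ B + C) (h2 : B + C ⊆ A) :
    minSet A = minSet (minSet B + minSet C) := by
  have hsub : minSet B + minSet C ⊆ B + C := by
    rintro _ ⟨b, hb, c, hc, rfl⟩
    exact ⟨b, hb.1, c, hc.1, rfl⟩
  ext x
  constructor
  · intro hx
    refine ⟨minSet_mem_sum h1 h2 hx, fun y hy hyle => ?_⟩
    exact hx.2 y (h2 (hsub hy)) hyle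
  · rintro ⟨hx, hxmin⟩
    have hxA : x ∈ A := h2 (hsub hx)
    refine ⟨hxA, fun y hy hyle => ?_⟩
    obtain ⟨m, hm, hmle⟩ := exists_minSet_le A hy
    have : m = x := hxmin m (minSet_mem_sum h1 h2 hm) (hmle.trans hyle)
    exact le_antisymm hyle (this ▸ hmle)
end
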